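/- arXiv:1305.6208 — 3 statements merged into one kernel-verified Lean document; each statement's English description precedes it below -/
import Mathlib

section
/- Let (X,μ) be a nonatomic probability space and T a tree on X. Then for every I ∈ T and every α ∈ (0,1) there exists a subfamily F(I) ⊆ T consisting of pairwise disjoint subsets of I such that μ(∪_{J ∈ F(I)} J) = Σ_{J ∈ F(I)} μ(J) = (1−α)·μ(I). -/
open MeasureTheory Filter Set

noncomputable section

/-- A tree on a probability space, as in the paper. -/
structure DTree (X : Type*) [MeasurableSpace X] (μ : Measure X) where
  mem : Set (Set X)
  child : Set X → Set (Set X)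
  meas : ∀ I ∈ mem, MeasurableSet I
  top_mem : Set.univ ∈ mem
  pos : ∀ I ∈ mem, 0 < μ I
  child_sub_mem : ∀ I ∈ mem, child I ⊆ mem
  child_countable : ∀ I ∈ mem, (child I).Countable
  child_two : ∀ I ∈ mem, ∃ J ∈ child I, ∃ K ∈ child I, J ≠ K
  child_sub : ∀ I ∈ mem, ∀ J ∈ child I, J ⊆ I
  child_disj : ∀ I ∈ mem, (child I).Pairwise Disjoint
  child_union : ∀ I ∈ mem, ⋃₀ child I = I
  generated : ∃ lvl : ℕ → Set (Set X),
    lvl 0 = {Set.univ} ∧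
    (∀ m, lvl (m + 1) = ⋃ I ∈ lvl m, child I) ∧
    mem = ⋃ m, lvl m ∧
    Tendsto (fun m => ⨆ I ∈ lvl m, μ I) atTop (nhds 0)

variable {X : Type*} [MeasurableSpace X]

/-- The average of `φ` over `I`. -/
def trAvg (μ : Measure X) (φ : X → ℝ) (I : Set X) : ℝ :=
  (μ I).toReal⁻¹ * ∫ x in I, φ x ∂μ

/-- The dyadic maximal operator associated with the tree `T`. -/
def trMax (μ : Measure X) (T : DTree X μ) (φ : X → ℝ) (x : X) : ℝ :=
  sSup {r : ℝ | ∃ I ∈ T.mem, x ∈ I ∧ r = trAvg μ (fun y => |φ y|) I}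

/-- The exceptional set `A_φ`. -/
def trBad (μ : Measure X) (T : DTree X μ) (φ : X → ℝ) : Set X :=
  {x | ∀ I ∈ T.mem, x ∈ I → trAvg μ φ I < trMax μ T φ x}

/-- `φ` is `T`-good if the exceptional set `A_φ` is null. -/
def TGood (μ : Measure X) (T : DTree X μ) (φ : X → ℝ) : Prop :=
  μ (trBad μ T φ) = 0

/-- The set `A(φ, I) = {x ∈ X \ A_φ : I_φ(x) = I}`, where `I_φ(x)` is the largest
element `I` of the tree with `x ∈ I` and `M_T φ x = Av_I(φ)`. -/
def trA (μ : Measure X) (T : DTree X μ) (φ : X → ℝ) (I : Set X) : Set X :=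
  {x | x ∉ trBad μ T φ ∧ I ∈ T.mem ∧ x ∈ I ∧ trMax μ T φ x = trAvg μ φ I ∧
    ∀ J ∈ T.mem, x ∈ J → trMax μ T φ x = trAvg μ φ J → J ⊆ I}

/-- The subtree `S_φ`. -/
def trS (μ : Measure X) (T : DTree X μ) (φ : X → ℝ) : Set (Set X) :=
  {I | I ∈ T.mem ∧ 0 < μ (trA μ T φ I)} ∪ {Set.univ}

/-- `J* = I` : `I` is the smallest element of `S_φ` properly containing `J`. -/
def IsStarOf (μ : Measure X) (T : DTree X μ) (φ : X → ℝ) (J I : Set X) : Prop :=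
  I ∈ trS μ T φ ∧ J ⊂ I ∧ ∀ K ∈ trS μ T φ, J ⊂ K → I ⊆ K

/-- `H_q(z) = (1-q) z^q + q z^(q-1)`. -/
def funH (q z : ℝ) : ℝ := (1 - q) * z ^ q + q * z ^ (q - 1)

/-- `ω_q(z) = (H_q⁻¹(z))^q`, with `H_q⁻¹` the inverse of `H_q : [1,∞) → [1,∞)`. -/
def funOmega (q z : ℝ) : ℝ := (Function.invFunOn (funH q) (Set.Ici 1) z) ^ q

/-- The constant `c = ω_q(((1-q)L^q + qL^(q-1)f)/h)`. -/
def bellC (q f h L : ℝ) : ℝ := funOmega q (((1 - q) * L ^ q + q * L ^ (q - 1) * f) / h)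

/-- An extremal sequence for the Bellman function of three variables. -/
def IsExtremal (μ : Measure X) (T : DTree X μ) (q f h L : ℝ) (φ : ℕ → X → ℝ) : Prop :=
  (∀ n x, 0 ≤ φ n x) ∧ (∀ n, Measurable (φ n)) ∧ (∀ n, Integrable (φ n) μ) ∧
  (∀ n, ∫ x, φ n x ∂μ = f) ∧ (∀ n, ∫ x, φ n x ^ q ∂μ = h) ∧
  Tendsto (fun n => ∫ x, (max (trMax μ T (φ n) x) L) ^ q ∂μ) atTop
    (nhds (bellC q f h L * h))

/-!
Fix the target `t ≤ μ I` and walk down the levels of the tree below `I`. At each level the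
cells not yet covered are split into their children, and children are added greedily (via Zorn)
to the selected family as long as its measure stays at most `t`. Once a child is rejected, the
selected measure is within the maximal measure of a cell of that level from `t`, and this mesh
tends to `0`; the selected families increase, so their union has measure exactly `t`.
-/

open scoped ENNReal Topology

theorem exists_seq_of_forall_exists_succ {α : Type*} (P : ℕ → α → Prop) (r : α → α → Prop)
    {a : α} (ha : P 0 a) (h : ∀ n a, P n a → ∃ b, P (n + 1) b ∧ r a b) :
    ∃ f : ℕ → α, (∀ n, P n (f n)) ∧ ∀ n, r (f n) (f (n + 1)) := by
  choose g hgP hgr using h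
  let f : (n : ℕ) → {b // P n b} :=
    fun n => Nat.rec ⟨a, ha⟩ (fun n b => ⟨g n b b.2, hgP n b b.2⟩) n
  exact ⟨fun n => (f n).1, fun n => (f n).2, fun n => hgr n _ (f n).2⟩

theorem tsum_subtype_le_of_finset_subset {β : Type*} (w : β → ℝ≥0∞) {G H : Set β}
    (F : Finset H) (hF : ∀ x ∈ F, (x : β) ∈ G) : ∑ x ∈ F, w x ≤ ∑' J : G, w J :=
  calc ∑ x ∈ F, w x = ∑ x ∈ F, G.indicator w x :=
        Finset.sum_congr rfl fun x hx => (indicator_of_mem (hF x hx) w).symm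
    _ ≤ ∑' x : H, G.indicator w x := ENNReal.sum_le_tsum F
    _ ≤ ∑' x, G.indicator w x := ENNReal.tsum_comp_le_tsum_of_injective Subtype.val_injective _
    _ = ∑' J : G, w J := (tsum_subtype G w).symm

theorem exists_maximal_tsum_le {β : Type*} (C : Set β) (w : β → ℝ≥0∞) {s t : ℝ≥0∞}
    (hst : s ≤ t) :
    ∃ G ⊆ C, s + ∑' J : G, w J ≤ t ∧ ∀ K ∈ C, K ∉ G → t < s + ∑' J : G, w J + w K := by
  set 𝒢 : Set (Set β) := {G | G ⊆ C ∧ s + ∑' J : G, w J ≤ t}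
  have hchain : ∀ c ⊆ 𝒢, IsChain (· ⊆ ·) c → c.Nonempty → ∃ ub ∈ 𝒢, ∀ G ∈ c, G ⊆ ub := by
    rintro c hc𝒢 hc ⟨G₀, hG₀⟩
    refine ⟨⋃₀ c, ⟨sUnion_subset fun G hG => (hc𝒢 hG).1, ?_⟩, fun G hG => subset_sUnion_of_mem hG⟩
    rw [ENNReal.tsum_eq_iSup_sum, ENNReal.add_iSup]
    refine iSup_le fun F => ?_
    obtain ⟨G, hGc, hFG⟩ := hc.directedOn.exists_mem_subset_of_finite_of_subset_sUnion ⟨G₀, hG₀⟩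
      (F.finite_toSet.image Subtype.val) (by rintro _ ⟨x, -, rfl⟩; exact x.2)
    calc s + ∑ x ∈ F, w x ≤ s + ∑' J : G, w J :=
          add_le_add_right (tsum_subtype_le_of_finset_subset w F
            fun x hx => hFG (mem_image_of_mem _ hx)) s
      _ ≤ t := (hc𝒢 hGc).2
  obtain ⟨G, -, hG⟩ := zorn_subset_nonempty 𝒢 hchain ∅ (by simpa [𝒢] using hst)
  refine ⟨G, hG.prop.1, hG.prop.2, fun K hKC hKG => lt_of_not_ge fun hle => hKG ?_⟩
  have hins : insert K G ∈ 𝒢 := by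
    refine ⟨insert_subset hKC hG.prop.1, ?_⟩
    rwa [insert_eq, ENNReal.summable.tsum_union_disjoint (disjoint_singleton_left.2 hKG)
      ENNReal.summable, tsum_singleton, add_comm (w K), ← add_assoc]
  exact hG.2 hins (subset_insert K G) (mem_insert K G)

namespace DTree

variable {μ : Measure X} (T : DTree X μ)

theorem countable_mem : T.mem.Countable := by
  obtain ⟨lvl, h0, hsucc, hmem, -⟩ := T.generated
  have hlvl : ∀ m, lvl m ⊆ T.mem := fun m => hmem ▸ subset_iUnion lvl m
  rw [hmem]
  refine countable_iUnion fun m => ?_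
  induction m with
  | zero => simp [h0]
  | succ m ih =>
    rw [hsucc]
    exact ih.biUnion fun J hJ => T.child_countable J (hlvl m hJ)

variable {T} {R : Set (Set X)}

theorem biUnion_child_subset_mem (hR : R ⊆ T.mem) : ⋃ K ∈ R, T.child K ⊆ T.mem :=
  iUnion₂_subset fun K hK => T.child_sub_mem K (hR hK)

theorem sUnion_biUnion_child (hR : R ⊆ T.mem) : ⋃₀ (⋃ K ∈ R, T.child K) = ⋃₀ R := by
  simp_rw [sUnion_iUnion]
  rw [sUnion_eq_biUnion]
  exact iUnion₂_congr fun K hK => T.child_union K (hR hK)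

theorem pairwise_disjoint_biUnion_child (hR : R ⊆ T.mem) (hd : R.Pairwise Disjoint) :
    (⋃ K ∈ R, T.child K).Pairwise Disjoint := by
  intro a ha b hb hab
  obtain ⟨Ka, hKa, haK⟩ := mem_iUnion₂.1 ha
  obtain ⟨Kb, hKb, hbK⟩ := mem_iUnion₂.1 hb
  obtain rfl | hK := eq_or_ne Ka Kb
  · exact T.child_disj Ka (hR hKa) haK hbK hab
  · exact (hd hKa hKb hK).mono (T.child_sub Ka (hR hKa) a haK) (T.child_sub Kb (hR hKb) b hbK)

end DTree

/-- A stage of the greedy construction below `I` with target `t`: `S` is the selected family and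
`R` the undecided part of the current level `L`. -/
structure GreedyStage (μ : Measure X) (T : DTree X μ) (I : Set X) (t : ℝ≥0∞)
    (L S R : Set (Set X)) : Prop where
  sel_mem : S ⊆ T.mem
  rest_mem : R ⊆ T.mem
  rest_sub : R ⊆ L
  sel_disj : S.Pairwise Disjoint
  rest_disj : R.Pairwise Disjoint
  disjoint_sel_rest : Disjoint (⋃₀ S) (⋃₀ R)
  union_eq : ⋃₀ S ∪ ⋃₀ R = I
  measure_le : μ (⋃₀ S) ≤ t
  le_measure_add : t ≤ μ (⋃₀ S) + ⨆ J ∈ L, μ J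

namespace GreedyStage

variable {μ : Measure X} {T : DTree X μ} {I : Set X} {t : ℝ≥0∞} {L S R : Set (Set X)}

theorem initial (hI : I ∈ T.mem) (hIL : I ∈ L) (htI : t ≤ μ I) :
    GreedyStage μ T I t L ∅ {I} where
  sel_mem := empty_subset _
  rest_mem := singleton_subset_iff.2 hI
  rest_sub := singleton_subset_iff.2 hIL
  sel_disj := pairwise_empty _
  rest_disj := pairwise_singleton _ _
  disjoint_sel_rest := by simp
  union_eq := by simp
  measure_le := by simp
  le_measure_add := by simpa using htI.trans (le_biSup (fun J => μ J) hIL)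

theorem subset_of_mem_sel (h : GreedyStage μ T I t L S R) {J : Set X} (hJ : J ∈ S) : J ⊆ I :=
  h.union_eq ▸ (subset_sUnion_of_mem hJ).trans subset_union_left

theorem exists_next (h : GreedyStage μ T I t L S R) (htI : t ≤ μ I) {L' : Set (Set X)}
    (hL' : ∀ K ∈ R, T.child K ⊆ L') :
    ∃ S' R', S ⊆ S' ∧ GreedyStage μ T I t L' S' R' := by
  set C := ⋃ K ∈ R, T.child K
  have hCmem : C ⊆ T.mem := DTree.biUnion_child_subset_mem h.rest_mem
  have hCd : C.Pairwise Disjoint := DTree.pairwise_disjoint_biUnion_child h.rest_mem h.rest_disj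
  have hCU : ⋃₀ C = ⋃₀ R := DTree.sUnion_biUnion_child h.rest_mem
  obtain ⟨G, hGC, hGt, hGmax⟩ := exists_maximal_tsum_le C (fun J => μ J) h.measure_le
  have hGd : G.Pairwise Disjoint := hCd.mono hGC
  have hGcount : G.Countable := T.countable_mem.mono (hGC.trans hCmem)
  have hGmeas : ∀ J ∈ G, MeasurableSet J := fun J hJ => T.meas J (hCmem (hGC hJ))
  have hSG : Disjoint (⋃₀ S) (⋃₀ G) := h.disjoint_sel_rest.mono_right (hCU ▸ sUnion_mono hGC)
  have hSG' : ∀ a ∈ S, ∀ b ∈ G, Disjoint a b := fun a ha b hb =>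
    hSG.mono (subset_sUnion_of_mem ha) (subset_sUnion_of_mem hb)
  have hGC' : Disjoint (⋃₀ G) (⋃₀ (C \ G)) :=
    disjoint_sUnion_left.2 fun a ha => disjoint_sUnion_right.2 fun b hb =>
      hCd (hGC ha) hb.1 (ne_of_mem_of_not_mem ha hb.2)
  have hμ : μ (⋃₀ (S ∪ G)) = μ (⋃₀ S) + ∑' J : G, μ J := by
    rw [sUnion_union, measure_union hSG (MeasurableSet.sUnion hGcount hGmeas),
      measure_sUnion hGcount hGd hGmeas]
  have hU : ⋃₀ (S ∪ G) ∪ ⋃₀ (C \ G) = I := by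
    rw [sUnion_union, union_assoc, ← sUnion_union, union_sdiff_cancel hGC, hCU, h.union_eq]
  refine ⟨S ∪ G, C \ G, subset_union_left,
    { sel_mem := union_subset h.sel_mem (hGC.trans hCmem)
      rest_mem := sdiff_subset.trans hCmem
      rest_sub := sdiff_subset.trans (iUnion₂_subset hL')
      sel_disj := pairwise_union.2 ⟨h.sel_disj, hGd, fun a ha b hb _ =>
        ⟨hSG' a ha b hb, (hSG' a ha b hb).symm⟩⟩
      rest_disj := hCd.mono sdiff_subset
      disjoint_sel_rest := sUnion_union S G ▸ disjoint_union_left.2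
        ⟨h.disjoint_sel_rest.mono_right (hCU ▸ sUnion_mono sdiff_subset), hGC'⟩
      union_eq := hU
      measure_le := hμ ▸ hGt
      le_measure_add := ?_ }⟩
  -- a rejected child has measure at most the mesh of `L'`; without one, `S ∪ G` covers `I`
  rcases (C \ G).eq_empty_or_nonempty with hCG | ⟨K, hKC, hKG⟩
  · rw [hCG, sUnion_empty, union_empty] at hU
    exact hU ▸ htI.trans le_self_add
  · calc t ≤ μ (⋃₀ (S ∪ G)) + μ K := (hμ ▸ hGmax K hKC hKG).le
      _ ≤ μ (⋃₀ (S ∪ G)) + ⨆ J ∈ L', μ J :=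
          add_le_add_right (le_biSup (fun J => μ J) (iUnion₂_subset hL' hKC)) _

theorem measure_sUnion_iUnion_eq {L S R : ℕ → Set (Set X)}
    (h : ∀ n, GreedyStage μ T I t (L n) (S n) (R n)) (hS : Monotone S)
    (hL : Tendsto (fun n => ⨆ J ∈ L n, μ J) atTop (𝓝 0)) : μ (⋃₀ ⋃ n, S n) = t := by
  have hmono : Monotone fun n => ⋃₀ S n := fun m n hmn => sUnion_mono (hS hmn)
  rw [sUnion_iUnion, hmono.measure_iUnion]
  refine le_antisymm (iSup_le fun n => (h n).measure_le) ?_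
  have hlim := (tendsto_const_nhds (x := ⨆ n, μ (⋃₀ S n))).add hL
  rw [add_zero] at hlim
  exact ge_of_tendsto' hlim fun n =>
    (h n).le_measure_add.trans (add_le_add_left (le_iSup (fun m => μ (⋃₀ S m)) n) _)

end GreedyStage

theorem DTree.exists_pairwise_disjoint_measure_sUnion_eq {μ : Measure X} (T : DTree X μ)
    {I : Set X} (hI : I ∈ T.mem) {t : ℝ≥0∞} (htI : t ≤ μ I) :
    ∃ F : Set (Set X), F ⊆ T.mem ∧ (∀ J ∈ F, J ⊆ I) ∧ F.Pairwise Disjoint ∧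
      μ (⋃₀ F) = ∑' J : F, μ (J : Set X) ∧ μ (⋃₀ F) = t := by
  obtain ⟨lvl, -, hsucc, hmem, htend⟩ := T.generated
  obtain ⟨m₀, hm₀⟩ := mem_iUnion.1 (hmem ▸ hI)
  obtain ⟨p, hp, hpS⟩ := exists_seq_of_forall_exists_succ
    (fun n (p : Set (Set X) × Set (Set X)) => GreedyStage μ T I t (lvl (m₀ + n)) p.1 p.2)
    (fun p q => p.1 ⊆ q.1) (a := (∅, {I}))
    (GreedyStage.initial hI hm₀ htI) fun n p hp => by
      obtain ⟨S', R', hSS', h'⟩ := hp.exists_next htI (L' := lvl (m₀ + n + 1))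
        fun K hK => hsucc _ ▸ subset_biUnion_of_mem (u := T.child) (hp.rest_sub hK)
      exact ⟨(S', R'), h', hSS'⟩
  have hS : Monotone fun n => (p n).1 := monotone_nat_of_le_succ hpS
  have hFmem : ⋃ n, (p n).1 ⊆ T.mem := iUnion_subset fun n => (hp n).sel_mem
  have hFd : (⋃ n, (p n).1).Pairwise Disjoint :=
    (pairwise_iUnion hS.directed_le).2 fun n => (hp n).sel_disj
  have hmesh : Tendsto (fun n => ⨆ J ∈ lvl (m₀ + n), μ J) atTop (𝓝 0) :=
    htend.comp (by simpa only [add_comm] using tendsto_add_atTop_nat m₀)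
  refine ⟨_, hFmem, fun J hJ => ?_, hFd,
    measure_sUnion (T.countable_mem.mono hFmem) hFd fun J hJ => T.meas J (hFmem hJ),
    GreedyStage.measure_sUnion_iUnion_eq hp hS hmesh⟩
  obtain ⟨n, hn⟩ := mem_iUnion.1 hJ
  exact (hp n).subset_of_mem_sel hn

theorem statement2_general {X : Type*} [MeasurableSpace X] (μ : Measure X) (T : DTree X μ)
    (I : Set X) (hI : I ∈ T.mem) (α : ℝ) (hα : α ∈ Set.Ioo (0 : ℝ) 1) :
    ∃ F : Set (Set X), F ⊆ T.mem ∧ (∀ J ∈ F, J ⊆ I) ∧ F.Pairwise Disjoint ∧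
      μ (⋃₀ F) = ∑' J : F, μ (J : Set X) ∧
      μ (⋃₀ F) = ENNReal.ofReal (1 - α) * μ I :=
  T.exists_pairwise_disjoint_measure_sUnion_eq hI
    (mul_le_of_le_one_left zero_le (ENNReal.ofReal_le_one.2 (by linarith [hα.1])))

/-- for every `I ∈ T` and `α ∈ (0,1)` there is a pairwise disjoint
subfamily of `T` consisting of subsets of `I` of total measure `(1-α)μ(I)`. -/
theorem statement2 {X : Type*} [MeasurableSpace X] (μ : Measure X)
    [IsProbabilityMeasure μ] [NullSingletonClass μ] (T : DTree X μ)
    (I : Set X) (hI : I ∈ T.mem) (α : ℝ) (hα : α ∈ Set.Ioo (0 : ℝ) 1) :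
    ∃ F : Set (Set X), F ⊆ T.mem ∧ (∀ J ∈ F, J ⊆ I) ∧ F.Pairwise Disjoint ∧
      μ (⋃₀ F) = ∑' J : F, μ (J : Set X) ∧
      μ (⋃₀ F) = ENNReal.ofReal (1 - α) * μ I :=
  statement2_general μ T I hI α hα

end
end

section
/- Let (X,μ) be a nonatomic probability space, T a tree on X, and φ a T-good function. If I ∈ S_φ, then there exists J ∈ C(I) such that J ∉ S_φ. -/
/-!
If every child `J` of `I` lay in `S_φ`, a point `x ∈ A(φ, J)` would give
`Av_I(φ) ≤ M_T φ(x) = Av_J(φ)`, strictly because `I_φ(x) = J ≠ I`. But `Av_I(φ)` is a weighted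
mean of the averages over the children of `I`, so they cannot all exceed it. The root, which
belongs to `S_φ` by definition, is no child.
-/

open MeasureTheory Filter Set

noncomputable section

variable {X : Type*} [MeasurableSpace X]

namespace DTree

variable {μ : Measure X} (T : DTree X μ)

def level : ℕ → Set (Set X) := T.generated.choose

lemma level_zero : T.level 0 = {univ} := T.generated.choose_spec.1

lemma level_succ (m : ℕ) : T.level (m + 1) = ⋃ I ∈ T.level m, T.child I :=
  T.generated.choose_spec.2.1 m

lemma mem_eq_iUnion_level : T.mem = ⋃ m, T.level m := T.generated.choose_spec.2.2.1

lemma level_subset_mem (m : ℕ) : T.level m ⊆ T.mem := by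
  rw [mem_eq_iUnion_level]
  exact subset_iUnion T.level m

lemma mem_of_mem_child {I J : Set X} (hI : I ∈ T.mem) (hJ : J ∈ T.child I) : J ∈ T.mem :=
  T.child_sub_mem I hI hJ

lemma subset_of_mem_child {I J : Set X} (hI : I ∈ T.mem) (hJ : J ∈ T.child I) : J ⊆ I :=
  T.child_sub I hI J hJ

lemma exists_level_superset (m k : ℕ) {J : Set X} (hJ : J ∈ T.level (m + k)) :
    ∃ I ∈ T.level m, J ⊆ I := by
  induction k generalizing J with
  | zero => exact ⟨J, hJ, subset_rfl⟩
  | succ k ih =>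
    rw [← add_assoc, level_succ, mem_iUnion₂] at hJ
    obtain ⟨P, hP, hJP⟩ := hJ
    obtain ⟨I, hI, hPI⟩ := ih hP
    exact ⟨I, hI, (T.subset_of_mem_child (T.level_subset_mem _ hP) hJP).trans hPI⟩

lemma pairwise_disjoint_level (m : ℕ) : (T.level m).Pairwise Disjoint := by
  induction m with
  | zero => rw [level_zero]; exact pairwise_singleton _ _
  | succ m ih =>
    intro J₁ h₁ J₂ h₂ hne
    rw [level_succ, mem_iUnion₂] at h₁ h₂
    obtain ⟨I₁, hI₁, hJ₁⟩ := h₁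
    obtain ⟨I₂, hI₂, hJ₂⟩ := h₂
    have hI₁mem := T.level_subset_mem m hI₁
    by_cases hI : I₁ = I₂
    · subst hI
      exact T.child_disj I₁ hI₁mem hJ₁ hJ₂ hne
    · exact (ih hI₁ hI₂ hI).mono
        (T.subset_of_mem_child hI₁mem hJ₁)
        (T.subset_of_mem_child (T.level_subset_mem m hI₂) hJ₂)

lemma subset_or_disjoint_of_mem_level {a b : ℕ} (hab : a ≤ b) {K J : Set X}
    (hK : K ∈ T.level a) (hJ : J ∈ T.level b) : J ⊆ K ∨ Disjoint J K := by
  obtain ⟨k, rfl⟩ := Nat.exists_eq_add_of_le hab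
  obtain ⟨I, hI, hJI⟩ := T.exists_level_superset a k hJ
  by_cases h : I = K
  · exact Or.inl (h ▸ hJI)
  · exact Or.inr ((T.pairwise_disjoint_level a hI hK h).mono_left hJI)

lemma subset_or_superset_of_mem {K J : Set X} (hK : K ∈ T.mem) (hJ : J ∈ T.mem) {x : X}
    (hxK : x ∈ K) (hxJ : x ∈ J) : K ⊆ J ∨ J ⊆ K := by
  rw [mem_eq_iUnion_level, mem_iUnion] at hK hJ
  obtain ⟨a, hKa⟩ := hK
  obtain ⟨b, hJb⟩ := hJ
  rcases le_total a b with hab | hba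
  · exact (T.subset_or_disjoint_of_mem_level hab hKa hJb).elim Or.inr
      fun h => absurd hxK (disjoint_left.1 h hxJ)
  · exact (T.subset_or_disjoint_of_mem_level hba hJb hKa).elim Or.inl
      fun h => absurd hxJ (disjoint_left.1 h hxK)

lemma child_ne {I J : Set X} (hI : I ∈ T.mem) (hJ : J ∈ T.child I) : J ≠ I := by
  rintro rfl
  obtain ⟨A, hA, B, hB, hAB⟩ := T.child_two J hI
  have hK : ∃ K ∈ T.child J, K ≠ J := by
    by_cases hAJ : A = J
    · exact ⟨B, hB, fun h => hAB (hAJ.trans h.symm)⟩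
    · exact ⟨A, hA, hAJ⟩
  obtain ⟨K, hK, hKJ⟩ := hK
  have hKempty : K = ∅ :=
    (T.child_disj J hI hK hJ hKJ).eq_bot_of_le (T.subset_of_mem_child hI hK)
  exact (T.pos K (T.mem_of_mem_child hI hK)).ne' (hKempty ▸ measure_empty)

end DTree

section Averages

variable {μ : Measure X} {φ : X → ℝ}

lemma setIntegral_eq_measure_mul_trAvg {K : Set X} (hK₀ : μ K ≠ 0) (hK : μ K ≠ ⊤) :
    ∫ x in K, φ x ∂μ = (μ K).toReal * trAvg μ φ K := by
  rw [trAvg, ← mul_assoc, mul_inv_cancel₀ (ENNReal.toReal_pos hK₀ hK).ne', one_mul]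

lemma trAvg_eq_zero_of_subset (h0 : ∀ x, 0 ≤ φ x) {J K : Set X} (hK : MeasurableSet K)
    (hKJ : K ⊆ J) (hφ : IntegrableOn φ J μ) (hJ : ∫ x in J, φ x ∂μ = 0) :
    trAvg μ φ K = 0 := by
  have hle : ∫ x in K, φ x ∂μ ≤ ∫ x in J, φ x ∂μ :=
    setIntegral_mono_set hφ (ae_of_all _ h0) hKJ.eventuallyLE
  rw [trAvg, le_antisymm (hle.trans_eq hJ) (setIntegral_nonneg hK fun x _ => h0 x), mul_zero]

lemma trAvg_le_of_superset [IsFiniteMeasure μ] (h0 : ∀ x, 0 ≤ φ x) (hφ : Integrable φ μ)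
    {J K : Set X} (hJK : J ⊆ K) (hJ : μ J ≠ 0) :
    trAvg μ φ K ≤ (μ J).toReal⁻¹ * ∫ x, φ x ∂μ := by
  have hμ : (μ K).toReal⁻¹ ≤ (μ J).toReal⁻¹ :=
    inv_anti₀ (ENNReal.toReal_pos hJ (measure_ne_top μ J))
      (ENNReal.toReal_mono (measure_ne_top μ K) (measure_mono hJK))
  exact mul_le_mul hμ (setIntegral_le_integral hφ (ae_of_all _ h0))
    (integral_nonneg fun x => h0 x) (inv_nonneg.2 ENNReal.toReal_nonneg)

/-- The average over `⋃ i, s i` is a weighted mean of the averages over the `s i`. -/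
lemma exists_trAvg_le_of_iUnion_eq [IsFiniteMeasure μ] {ι : Type*} [Countable ι] [Nonempty ι]
    {s : ι → Set X} {I : Set X} (hs : ∀ i, MeasurableSet (s i))
    (hdisj : Pairwise (Function.onFun Disjoint s)) (hpos : ∀ i, μ (s i) ≠ 0) (hI : ⋃ i, s i = I)
    (hφ : IntegrableOn φ I μ) : ∃ i, trAvg μ φ (s i) ≤ trAvg μ φ I := by
  by_contra! hlt
  have hintegral : HasSum (fun i => ∫ x in s i, φ x ∂μ) (∫ x in I, φ x ∂μ) :=
    hI ▸ hasSum_integral_iUnion hs hdisj (hI ▸ hφ)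
  have hmeasure : HasSum (fun i => (μ (s i)).toReal) (μ I).toReal := by
    have hfin : ∑' i, μ (s i) ≠ ⊤ := by
      rw [← measure_iUnion hdisj hs]
      exact measure_ne_top μ _
    have h := ENNReal.hasSum_toReal hfin
    rwa [← ENNReal.tsum_toReal_eq fun i => measure_ne_top μ _, ← measure_iUnion hdisj hs,
      hI] at h
  have hI₀ : μ I ≠ 0 := by
    obtain ⟨i⟩ := ‹Nonempty ι›
    exact fun h => hpos i (measure_mono_null (hI ▸ subset_iUnion s i) h)
  have hstrict : ∀ i, (μ (s i)).toReal * trAvg μ φ I < ∫ x in s i, φ x ∂μ := fun i => by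
    rw [setIntegral_eq_measure_mul_trAvg (hpos i) (measure_ne_top μ _)]
    exact mul_lt_mul_of_pos_left (hlt i) (ENNReal.toReal_pos (hpos i) (measure_ne_top μ _))
  have := hasSum_lt (fun i => (hstrict i).le) (hstrict (Classical.arbitrary ι))
    (hmeasure.mul_right (trAvg μ φ I)) hintegral
  rw [← setIntegral_eq_measure_mul_trAvg hI₀ (measure_ne_top μ I)] at this
  exact lt_irrefl _ this

end Averages

lemma DTree.exists_child_trAvg_le {μ : Measure X} [IsFiniteMeasure μ] (T : DTree X μ)
    {φ : X → ℝ} {I : Set X} (hI : I ∈ T.mem) (hφ : IntegrableOn φ I μ) :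
    ∃ J ∈ T.child I, trAvg μ φ J ≤ trAvg μ φ I := by
  have : Countable (T.child I) := (T.child_countable I hI).to_subtype
  obtain ⟨J₀, hJ₀, -⟩ := T.child_two I hI
  have : Nonempty (T.child I) := ⟨⟨J₀, hJ₀⟩⟩
  obtain ⟨⟨J, hJ⟩, hle⟩ := exists_trAvg_le_of_iUnion_eq (s := fun J : T.child I => (J : Set X))
    (fun J => T.meas J (T.mem_of_mem_child hI J.2))
    (fun J K hne => T.child_disj I hI J.2 K.2 (Subtype.coe_ne_coe.2 hne))
    (fun J => (T.pos J (T.mem_of_mem_child hI J.2)).ne')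
    (by rw [← sUnion_eq_iUnion]; exact T.child_union I hI) hφ
  exact ⟨J, hJ, hle⟩

section MaximalFunction

variable {μ : Measure X} {T : DTree X μ} {φ : X → ℝ}

lemma trMax_eq_sSup_trAvg (h0 : ∀ x, 0 ≤ φ x) (x : X) :
    trMax μ T φ x = sSup {r | ∃ K ∈ T.mem, x ∈ K ∧ r = trAvg μ φ K} := by
  have habs : (fun y => |φ y|) = φ := funext fun y => abs_of_nonneg (h0 y)
  rw [trMax, habs]

variable [IsFiniteMeasure μ]

/-- Were the averages through `x` unbounded, `trMax μ T φ x` would be the junk value `0`, which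
equals `trAvg μ φ J`; so `φ` vanishes on `J`, and every tree set through `x` lies in `J` or
contains it. -/
lemma bddAbove_trAvg_of_mem_trA (h0 : ∀ x, 0 ≤ φ x) (hφ : Integrable φ μ) {J : Set X} {x : X}
    (hx : x ∈ trA μ T φ J) : BddAbove {r | ∃ K ∈ T.mem, x ∈ K ∧ r = trAvg μ φ K} := by
  obtain ⟨-, hJ, hxJ, hmax, -⟩ := hx
  by_contra hb
  have hJ₀ : μ J ≠ 0 := (T.pos J hJ).ne'
  have hJint : ∫ x in J, φ x ∂μ = 0 := by
    have havg : trAvg μ φ J = 0 := by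
      rw [← hmax, trMax_eq_sSup_trAvg h0, Real.sSup_of_not_bddAbove hb]
    rw [setIntegral_eq_measure_mul_trAvg hJ₀ (measure_ne_top μ J), havg, mul_zero]
  refine hb ⟨max 0 ((μ J).toReal⁻¹ * ∫ x, φ x ∂μ), ?_⟩
  rintro r ⟨K, hK, hxK, rfl⟩
  rcases T.subset_or_superset_of_mem hK hJ hxK hxJ with hKJ | hJK
  · exact (trAvg_eq_zero_of_subset h0 (T.meas K hK) hKJ hφ.integrableOn hJint).le.trans
      (le_max_left _ _)
  · exact (trAvg_le_of_superset h0 hφ hJK hJ₀).trans (le_max_right _ _)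

lemma trAvg_le_trMax_of_mem_trA (h0 : ∀ x, 0 ≤ φ x) (hφ : Integrable φ μ) {J K : Set X}
    {x : X} (hx : x ∈ trA μ T φ J) (hK : K ∈ T.mem) (hxK : x ∈ K) :
    trAvg μ φ K ≤ trMax μ T φ x := by
  rw [trMax_eq_sSup_trAvg h0]
  exact le_csSup (bddAbove_trAvg_of_mem_trA h0 hφ hx) ⟨K, hK, hxK, rfl⟩

lemma trAvg_lt_of_mem_trA_of_mem_child (h0 : ∀ x, 0 ≤ φ x) (hφ : Integrable φ μ)
    {I J : Set X} (hI : I ∈ T.mem) (hJ : J ∈ T.child I) {x : X} (hx : x ∈ trA μ T φ J) :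
    trAvg μ φ I < trAvg μ φ J := by
  have hxI : x ∈ I := T.subset_of_mem_child hI hJ hx.2.2.1
  have hle := trAvg_le_trMax_of_mem_trA h0 hφ hx hI hxI
  obtain ⟨-, -, -, hmax, hlargest⟩ := hx
  rw [hmax] at hle
  refine hle.lt_of_ne fun heq => T.child_ne hI hJ ?_
  exact (T.subset_of_mem_child hI hJ).antisymm (hlargest I hI hxI (hmax.trans heq.symm))

end MaximalFunction

theorem statement5_general {X : Type*} [MeasurableSpace X] (μ : Measure X)
    [IsProbabilityMeasure μ] (T : DTree X μ)
    (φ : X → ℝ) (h0 : ∀ x, 0 ≤ φ x) (hint : Integrable φ μ)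
    (I : Set X) (hI : I ∈ trS μ T φ) :
    ∃ J ∈ T.child I, J ∉ trS μ T φ := by
  have hImem : I ∈ T.mem := hI.elim And.left fun h => (mem_singleton_iff.1 h) ▸ T.top_mem
  obtain ⟨J, hJ, hle⟩ := T.exists_child_trAvg_le hImem hint.integrableOn
  refine ⟨J, hJ, ?_⟩
  rintro (⟨-, hA⟩ | rfl)
  · obtain ⟨x, hx⟩ := nonempty_of_measure_ne_zero hA.ne'
    exact (trAvg_lt_of_mem_trA_of_mem_child h0 hint hImem hJ hx).not_ge hle
  · exact T.child_ne hImem hJ (eq_univ_of_univ_subset (T.subset_of_mem_child hImem hJ)).symm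

/-- every `I ∈ S_φ` has a child not in `S_φ`. -/
theorem statement5 {X : Type*} [MeasurableSpace X] (μ : Measure X)
    [IsProbabilityMeasure μ] [NullSingletonClass μ] (T : DTree X μ)
    (φ : X → ℝ) (h0 : ∀ x, 0 ≤ φ x) (hint : Integrable φ μ) (hgood : TGood μ T φ)
    (I : Set X) (hI : I ∈ trS μ T φ) :
    ∃ J ∈ T.child I, J ∉ trS μ T φ :=
  statement5_general μ T φ h0 hint I hI

end
end

section
/- Let q ∈ (0,1) be fixed. Then: (i) the function ω_q : [1,∞) → [1,∞) is strictly increasing and strictly concave; (ii) the function U_q(x) = ω_q(x)/x is strictly increasing on [1,∞). -/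
/-!
`H_q` is an increasing bijection of `[1,∞)` and `ω_q = (H_q⁻¹)^q` has the explicit inverse
`K_q(w) = (1-q) w + q w^((q-1)/q)`, since `K_q(u^q) = H_q(u)`. On `[1,∞)` the function `K_q` is
strictly increasing and strictly convex (`K_q'(w) = (1-q)(1 - w^(-1/q))` increases from `0`),
and the inverse of an increasing strictly convex function is strictly concave. Finally,
`x / ω_q(x) = H_q(u) / u^q = 1 - q + q/u` with `u = H_q⁻¹(x)`, which decreases in `x`.
-/

open MeasureTheory Filter Set

noncomputable section

theorem StrictMonoOn.strictMonoOn_of_rightInvOn {α β : Type*} [LinearOrder α] [Preorder β]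
    {s : Set α} {t : Set β} {f : α → β} {g : β → α} (hf : StrictMonoOn f s) (hg : MapsTo g t s)
    (hfg : RightInvOn g f t) : StrictMonoOn g t := fun x hx y hy hxy =>
  (hf.lt_iff_lt (hg hx) (hg hy)).1 (by rwa [hfg hx, hfg hy])

theorem StrictConvexOn.strictConcaveOn_of_rightInvOn {𝕜 E β : Type*} [Semiring 𝕜]
    [PartialOrder 𝕜] [AddCommMonoid E] [LinearOrder E] [SMul 𝕜 E] [AddCommMonoid β]
    [PartialOrder β] [SMul 𝕜 β] {s : Set E} {t : Set β} {f : E → β} {g : β → E}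
    (hf : StrictConvexOn 𝕜 s f) (hf_mono : StrictMonoOn f s) (ht : Convex 𝕜 t)
    (hg : MapsTo g t s) (hfg : RightInvOn g f t) : StrictConcaveOn 𝕜 t g := by
  refine ⟨ht, fun x hx y hy hxy a b ha hb hab => ?_⟩
  have hgxy : g x ≠ g y := fun h => hxy (by rw [← hfg hx, ← hfg hy, h])
  have hmem : a • x + b • y ∈ t := ht hx hy ha.le hb.le hab
  refine (hf_mono.lt_iff_lt (hf.1 (hg hx) (hg hy) ha.le hb.le hab) (hg hmem)).1 ?_
  calc f (a • g x + b • g y) < a • f (g x) + b • f (g y) := hf.2 (hg hx) (hg hy) hgxy ha hb hab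
    _ = f (g (a • x + b • y)) := by rw [hfg hx, hfg hy, hfg hmem]

section Omega

variable {q : ℝ}

theorem funH_one : funH q 1 = 1 := by simp [funH]

theorem hasDerivAt_funH {y : ℝ} (hy : 0 < y) :
    HasDerivAt (funH q) (q * (1 - q) * (y ^ (q - 1) - y ^ (q - 2))) y := by
  refine (((Real.hasDerivAt_rpow_const (p := q) (Or.inl hy.ne')).const_mul (1 - q)).add
    ((Real.hasDerivAt_rpow_const (p := q - 1) (Or.inl hy.ne')).const_mul q)).congr_deriv ?_
  rw [show q - 1 - 1 = q - 2 by ring]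
  ring

theorem continuousOn_funH : ContinuousOn (funH q) (Ici 1) := fun _ hy =>
  (hasDerivAt_funH (zero_lt_one.trans_le hy)).continuousAt.continuousWithinAt

theorem strictMonoOn_funH (hq : q ∈ Ioo 0 1) : StrictMonoOn (funH q) (Ici 1) := by
  refine strictMonoOn_of_deriv_pos (convex_Ici 1) continuousOn_funH fun y hy => ?_
  rw [interior_Ici] at hy
  rw [(hasDerivAt_funH (zero_lt_one.trans hy)).deriv]
  have : y ^ (q - 2) < y ^ (q - 1) := Real.rpow_lt_rpow_of_exponent_lt hy (by linarith)
  exact mul_pos (mul_pos hq.1 (sub_pos.2 hq.2)) (sub_pos.2 this)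

theorem tendsto_funH_atTop (hq : q ∈ Ioo 0 1) : Tendsto (funH q) atTop atTop := by
  refine tendsto_atTop_mono' _ ?_
    ((tendsto_rpow_atTop hq.1).const_mul_atTop (sub_pos.2 hq.2))
  filter_upwards [eventually_ge_atTop 0] with y hy
  exact le_add_of_nonneg_right (mul_nonneg hq.1.le (Real.rpow_nonneg hy _))

theorem surjOn_funH (hq : q ∈ Ioo 0 1) : SurjOn (funH q) (Ici 1) (Ici 1) := by
  intro z hz
  obtain ⟨y, hzy, hy⟩ :=
    (((tendsto_funH_atTop hq).eventually_ge_atTop z).and (eventually_ge_atTop 1)).exists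
  exact continuousOn_funH.surjOn_Icc self_mem_Ici hy ⟨by rwa [funH_one], hzy⟩

theorem strictMonoOn_invFunOn_funH (hq : q ∈ Ioo 0 1) :
    StrictMonoOn (Function.invFunOn (funH q) (Ici 1)) (Ici 1) :=
  (strictMonoOn_funH hq).strictMonoOn_of_rightInvOn (surjOn_funH hq).mapsTo_invFunOn
    (surjOn_funH hq).rightInvOn_invFunOn

def funK (q w : ℝ) : ℝ := (1 - q) * w + q * w ^ ((q - 1) / q)

theorem hasDerivAt_funK (hq : q ≠ 0) {w : ℝ} (hw : 0 < w) :
    HasDerivAt (funK q) ((1 - q) * (1 - w ^ (-q⁻¹))) w := by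
  refine (((hasDerivAt_id w).const_mul (1 - q)).add
    ((Real.hasDerivAt_rpow_const (p := (q - 1) / q) (Or.inl hw.ne')).const_mul q)).congr_deriv ?_
  rw [show (q - 1) / q - 1 = -q⁻¹ by field_simp; ring]
  field_simp
  ring

theorem deriv_funK (hq : q ≠ 0) {w : ℝ} (hw : 0 < w) :
    deriv (funK q) w = (1 - q) * (1 - w ^ (-q⁻¹)) :=
  (hasDerivAt_funK hq hw).deriv

theorem continuousOn_funK (hq : q ≠ 0) : ContinuousOn (funK q) (Ici 1) := fun _ hw =>
  (hasDerivAt_funK hq (zero_lt_one.trans_le hw)).continuousAt.continuousWithinAt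

theorem strictMonoOn_funK (hq : q ∈ Ioo 0 1) : StrictMonoOn (funK q) (Ici 1) := by
  refine strictMonoOn_of_deriv_pos (convex_Ici 1) (continuousOn_funK hq.1.ne') fun w hw => ?_
  rw [interior_Ici] at hw
  rw [deriv_funK hq.1.ne' (zero_lt_one.trans hw)]
  exact mul_pos (sub_pos.2 hq.2)
    (sub_pos.2 (Real.rpow_lt_one_of_one_lt_of_neg hw (neg_neg_of_pos (inv_pos.2 hq.1))))

theorem strictConvexOn_funK (hq : q ∈ Ioo 0 1) : StrictConvexOn ℝ (Ici 1) (funK q) := by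
  refine StrictMonoOn.strictConvexOn_of_deriv (convex_Ici 1) (continuousOn_funK hq.1.ne') ?_
  rw [interior_Ici]
  intro v (hv : 1 < v) w (hw : 1 < w) hvw
  rw [deriv_funK hq.1.ne' (zero_lt_one.trans hv), deriv_funK hq.1.ne' (zero_lt_one.trans hw)]
  have := Real.rpow_lt_rpow_of_neg (zero_lt_one.trans hv) hvw (neg_neg_of_pos (inv_pos.2 hq.1))
  exact mul_lt_mul_of_pos_left (sub_lt_sub_left this 1) (sub_pos.2 hq.2)

theorem funK_rpow_self (hq : q ≠ 0) {u : ℝ} (hu : 0 ≤ u) : funK q (u ^ q) = funH q u := by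
  rw [funK, funH, ← Real.rpow_mul hu, mul_div_cancel₀ _ hq]

theorem rightInvOn_funOmega_funK (hq : q ∈ Ioo 0 1) : RightInvOn (funOmega q) (funK q) (Ici 1) :=
  fun z hz => by
    rw [funOmega, funK_rpow_self hq.1.ne'
      (zero_le_one.trans ((surjOn_funH hq).mapsTo_invFunOn hz)),
      (surjOn_funH hq).rightInvOn_invFunOn hz]

theorem mapsTo_funOmega (hq : q ∈ Ioo 0 1) : MapsTo (funOmega q) (Ici 1) (Ici 1) := fun _ hz =>
  Real.one_le_rpow ((surjOn_funH hq).mapsTo_invFunOn hz) hq.1.le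

theorem funH_div_rpow_self {u : ℝ} (hu : 0 < u) : funH q u / u ^ q = 1 - q + q / u := by
  rw [funH, Real.rpow_sub_one hu.ne']
  field_simp

theorem funOmega_div_eq (hq : q ∈ Ioo 0 1) {z : ℝ} (hz : z ∈ Ici 1) :
    funOmega q z / z = (1 - q + q / Function.invFunOn (funH q) (Ici 1) z)⁻¹ := by
  rw [← funH_div_rpow_self (zero_lt_one.trans_le ((surjOn_funH hq).mapsTo_invFunOn hz)),
    inv_div, (surjOn_funH hq).rightInvOn_invFunOn hz, funOmega]

theorem strictMonoOn_funOmega_div (hq : q ∈ Ioo 0 1) :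
    StrictMonoOn (fun z => funOmega q z / z) (Ici 1) := by
  intro x hx y hy hxy
  have hux : 1 ≤ Function.invFunOn (funH q) (Ici 1) x := (surjOn_funH hq).mapsTo_invFunOn hx
  have hpos : ∀ u : ℝ, 1 ≤ u → 0 < 1 - q + q / u := fun u hu =>
    add_pos (sub_pos.2 hq.2) (div_pos hq.1 (zero_lt_one.trans_le hu))
  dsimp only
  rw [funOmega_div_eq hq hx, funOmega_div_eq hq hy]
  refine (inv_lt_inv₀ (hpos _ hux) (hpos _ ((surjOn_funH hq).mapsTo_invFunOn hy))).2 ?_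
  exact add_lt_add_right (div_lt_div_of_pos_left hq.1 (zero_lt_one.trans_le hux)
    (strictMonoOn_invFunOn_funH hq hx hy hxy)) _

end Omega

/-- `ω_q` is strictly increasing and strictly concave on `[1,∞)`,
and `x ↦ ω_q(x)/x` is strictly increasing on `[1,∞)`. -/
theorem statement8 (q : ℝ) (hq : q ∈ Set.Ioo (0 : ℝ) 1) :
    StrictMonoOn (funOmega q) (Set.Ici 1) ∧
    StrictConcaveOn ℝ (Set.Ici 1) (funOmega q) ∧
    StrictMonoOn (fun x => funOmega q x / x) (Set.Ici 1) :=
  ⟨(strictMonoOn_funK hq).strictMonoOn_of_rightInvOn (mapsTo_funOmega hq)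
      (rightInvOn_funOmega_funK hq),
    (strictConvexOn_funK hq).strictConcaveOn_of_rightInvOn (strictMonoOn_funK hq)
      (convex_Ici 1) (mapsTo_funOmega hq) (rightInvOn_funOmega_funK hq),
    strictMonoOn_funOmega_div hq⟩

end
end
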